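/- arXiv:quant-ph/0407152 — 3 statements merged into one kernel-verified Lean document; each statement's English description precedes it below -/
import Mathlib

section
/- Let ξ_1, ..., ξ_m be nonzero vectors in ℂ^D whose span is all of ℂ^D, so that N := Σ_{i=1}^m ξ_i ξ_i† is a positive definite matrix. Define the Pretty Good Measurement elements M_i := N^{-1/2} ξ_i ξ_i† N^{-1/2}, where N^{-1/2} is the inverse of the positive definite square root of N. Then for every index i, ⟨ξ_i, M_i ξ_i⟩ / ‖ξ_i‖² ≥ 1 - Σ_{j ≠ i} |⟨ξ_i, ξ_j⟩|² / ‖ξ_i‖⁴. -/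
open Matrix
open scoped InnerProductSpace ComplexOrder MatrixOrder

/-- The outer product `v v†` of a vector `v ∈ ℂ^D`, as the matrix sending `w` to `⟨v, w⟩ v`. -/
noncomputable def outer {D : ℕ} (v : EuclideanSpace ℂ (Fin D)) : Matrix (Fin D) (Fin D) ℂ :=
  Matrix.of fun a b => v a * (starRingEnd ℂ) (v b)

/-!
Write `x = ξ i`, `S = N^{1/2}` and `s = Σ_{j ≠ i} |⟨x, ξ_j⟩|²`. Since `S⁻¹` is Hermitian, the
numerator is `⟨x, S⁻¹ x⟩²`, while `⟨x, N x⟩ = ‖x‖⁴ + s`. Cauchy–Schwarz for the semi-inner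
product `⟨u, S v⟩`, applied to `S⁻¹ x` and `x`, gives `‖x‖⁴ ≤ ⟨x, S⁻¹ x⟩ ⟨x, S x⟩`, and the
ordinary one gives `⟨x, S x⟩² ≤ ‖x‖² ⟨x, N x⟩`. Together,
`⟨x, S⁻¹ x⟩² ‖x‖² ≥ ‖x‖⁸ / (‖x‖⁴ + s) ≥ ‖x‖⁴ - s`.
-/

open RCLike
open InnerProductSpace (rankOne)

section InnerProductSpace

variable {𝕜 E : Type*} [RCLike 𝕜] [NormedAddCommGroup E] [InnerProductSpace 𝕜 E]

theorem norm_inner_self_eq_norm_sq (x : E) : ‖⟪x, x⟫_𝕜‖ = ‖x‖ ^ 2 := by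
  rw [← inner_self_re_eq_norm, inner_self_eq_norm_sq]

theorem re_inner_sum_rankOne_self_apply {ι : Type*} (s : Finset ι) (v : ι → E) (x : E) :
    re ⟪x, ∑ j ∈ s, rankOne 𝕜 (v j) (v j) x⟫_𝕜 = ∑ j ∈ s, ‖⟪x, v j⟫_𝕜‖ ^ 2 := by
  rw [inner_sum, map_sum]
  refine Finset.sum_congr rfl fun j _ => ?_
  rw [InnerProductSpace.rankOne_apply, inner_smul_right, ← inner_conj_symm (v j) x,
    RCLike.conj_mul, ← ofReal_pow, ofReal_re]

namespace LinearMap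

abbrev IsPositive.preInnerProductSpaceCore {S : E →ₗ[𝕜] E} (hS : S.IsPositive) :
    PreInnerProductSpace.Core 𝕜 E where
  inner u v := ⟪u, S v⟫_𝕜
  conj_inner_symm u v := by rw [inner_conj_symm, hS.isSymmetric]
  re_inner_nonneg := hS.re_inner_nonneg_right
  add_left u v w := inner_add_left u v (S w)
  smul_left u v r := inner_smul_left u (S v) r

theorem IsPositive.norm_inner_map_sq_le {S : E →ₗ[𝕜] E} (hS : S.IsPositive) (u v : E) :
    ‖⟪u, S v⟫_𝕜‖ ^ 2 ≤ re ⟪u, S u⟫_𝕜 * re ⟪v, S v⟫_𝕜 := by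
  have h := InnerProductSpace.Core.inner_mul_inner_self_le (c := hS.preInnerProductSpaceCore) u v
  rwa [InnerProductSpace.Core.norm_inner_symm (c := hS.preInnerProductSpaceCore) v u, ← sq] at h

theorem IsPositive.norm_pow_four_le_re_inner_mul_re_inner {S R : E →ₗ[𝕜] E} (hS : S.IsPositive)
    (hSR : S ∘ₗ R = id) (x : E) : ‖x‖ ^ 4 ≤ re ⟪x, R x⟫_𝕜 * re ⟪x, S x⟫_𝕜 := by
  have hRx : S (R x) = x := congr($hSR x)
  have h := hS.norm_inner_map_sq_le (R x) x
  rwa [← hS.isSymmetric, hRx, norm_inner_self_eq_norm_sq, inner_re_symm, ← pow_mul] at h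

theorem IsSymmetric.re_inner_map_self_sq_le {S : E →ₗ[𝕜] E} (hS : S.IsSymmetric) (x : E) :
    re ⟪x, S x⟫_𝕜 ^ 2 ≤ ‖x‖ ^ 2 * re ⟪x, S (S x)⟫_𝕜 := by
  have hSx : re ⟪x, S (S x)⟫_𝕜 = ‖S x‖ ^ 2 := by
    rw [← hS, ← inner_self_eq_norm_sq (𝕜 := 𝕜)]
  calc re ⟪x, S x⟫_𝕜 ^ 2 ≤ ‖⟪x, S x⟫_𝕜‖ ^ 2 := by
        rw [← sq_abs]; exact pow_le_pow_left₀ (abs_nonneg _) (abs_re_le_norm _) 2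
    _ ≤ (‖x‖ * ‖S x‖) ^ 2 := by gcongr; exact norm_inner_le_norm _ _
    _ = ‖x‖ ^ 2 * re ⟪x, S (S x)⟫_𝕜 := by rw [hSx, mul_pow]

theorem IsSymmetric.re_inner_map_rankOne_map_self {R : E →ₗ[𝕜] E} (hR : R.IsSymmetric) (x : E) :
    re ⟪x, R (rankOne 𝕜 x x (R x))⟫_𝕜 = re ⟪x, R x⟫_𝕜 ^ 2 := by
  rw [InnerProductSpace.rankOne_apply, map_smul, inner_smul_right, ← sq,
    ← hR.coe_re_inner_self_apply, ← ofReal_pow, ofReal_re, ofReal_re]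

end LinearMap

end InnerProductSpace

section Outer

variable {D : ℕ}

theorem toEuclideanLin_outer (v : EuclideanSpace ℂ (Fin D)) :
    toEuclideanLin (outer v) = rankOne ℂ v v := by
  rw [← LinearEquiv.eq_symm_apply, InnerProductSpace.symm_toEuclideanLin_rankOne]
  ext a b
  simp [outer, vecMulVec_apply]

theorem re_inner_conj_outer_self {R : Matrix (Fin D) (Fin D) ℂ} (hR : R.IsHermitian)
    (x : EuclideanSpace ℂ (Fin D)) :
    (⟪x, (WithLp.toLp 2 ((R * outer x * R).mulVec x) : EuclideanSpace ℂ (Fin D))⟫_ℂ).re =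
      (⟪x, toEuclideanLin R x⟫_ℂ).re ^ 2 := by
  have hRxR : (WithLp.toLp 2 ((R * outer x * R).mulVec x) : EuclideanSpace ℂ (Fin D)) =
      toEuclideanLin R (rankOne ℂ x x (toEuclideanLin R x)) := by
    rw [← ContinuousLinearMap.coe_coe, ← toEuclideanLin_outer, ← mulVec_mulVec, ← mulVec_mulVec]
    rfl
  rw [hRxR]
  exact (isSymmetric_toEuclideanLin_iff.2 hR).re_inner_map_rankOne_map_self x

theorem re_inner_sum_outer_self {ι : Type*} (s : Finset ι) (v : ι → EuclideanSpace ℂ (Fin D))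
    (x : EuclideanSpace ℂ (Fin D)) :
    (⟪x, toEuclideanLin (∑ j ∈ s, outer (v j)) x⟫_ℂ).re = ∑ j ∈ s, ‖⟪x, v j⟫_ℂ‖ ^ 2 := by
  rw [map_sum, LinearMap.sum_apply]
  simp only [toEuclideanLin_outer, ContinuousLinearMap.coe_coe]
  exact re_inner_sum_rankOne_self_apply (𝕜 := ℂ) s v x

end Outer

theorem one_sub_div_pow_four_le_sq_div_sq {n a b s : ℝ} (hn : 0 < n) (hs : 0 ≤ s)
    (hab : n ^ 4 ≤ a * b) (hb : b ^ 2 ≤ n ^ 2 * (n ^ 4 + s)) :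
    1 - s / n ^ 4 ≤ a ^ 2 / n ^ 2 := by
  have h8 : n ^ 8 ≤ a ^ 2 * n ^ 2 * (n ^ 4 + s) :=
    calc n ^ 8 = (n ^ 4) ^ 2 := by ring
      _ ≤ (a * b) ^ 2 := pow_le_pow_left₀ (by positivity) hab 2
      _ = a ^ 2 * b ^ 2 := by ring
      _ ≤ a ^ 2 * (n ^ 2 * (n ^ 4 + s)) := mul_le_mul_of_nonneg_left hb (sq_nonneg a)
      _ = a ^ 2 * n ^ 2 * (n ^ 4 + s) := by ring
  have key : n ^ 4 - s ≤ a ^ 2 * n ^ 2 :=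
    le_of_mul_le_mul_right (by nlinarith [sq_nonneg s]) (by positivity : 0 < n ^ 4 + s)
  rw [one_sub_div (by positivity), div_le_div_iff₀ (by positivity) (by positivity)]
  nlinarith [mul_le_mul_of_nonneg_left key (sq_nonneg n)]

theorem pgm_success_bound_general
    (D m : ℕ) (ξ : Fin m → EuclideanSpace ℂ (Fin D))
    (hne : ∀ i, ξ i ≠ 0)
    (N : Matrix (Fin D) (Fin D) ℂ) (hN : N = ∑ i, outer (ξ i))
    (hNpd : N.PosDef)
    (M : Fin m → Matrix (Fin D) (Fin D) ℂ)
    (hM : ∀ i, M i = (CFC.sqrt N)⁻¹ * outer (ξ i) * (CFC.sqrt N)⁻¹) :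
    ∀ i, (⟪ξ i, (WithLp.toLp 2 ((M i).mulVec (ξ i)) : EuclideanSpace ℂ (Fin D))⟫_ℂ).re / ‖ξ i‖ ^ 2 ≥
      1 - (∑ j ∈ Finset.univ.erase i, ‖⟪ξ i, ξ j⟫_ℂ‖ ^ 2) / ‖ξ i‖ ^ 4 := by
  intro i
  set S := CFC.sqrt N
  have hSpsd : S.PosSemidef := (CFC.sqrt_nonneg N).posSemidef
  have hS : (toEuclideanLin S).IsPositive := isPositive_toEuclideanLin_iff.2 hSpsd
  have hSS : S * S = N := CFC.sqrt_mul_sqrt_self N hNpd.posSemidef.nonneg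
  have hSinv : toEuclideanLin S ∘ₗ toEuclideanLin S⁻¹ = LinearMap.id := by
    rw [← toLpLin_mul_same, mul_nonsing_inv _ ((isUnit_iff_isUnit_det S).1
      ((CFC.isUnit_sqrt_iff N).2 hNpd.isUnit)), toLpLin_one]
  have hNx : (⟪ξ i, toEuclideanLin S (toEuclideanLin S (ξ i))⟫_ℂ).re =
      ‖ξ i‖ ^ 4 + ∑ j ∈ Finset.univ.erase i, ‖⟪ξ i, ξ j⟫_ℂ‖ ^ 2 := by
    rw [← LinearMap.comp_apply, ← toLpLin_mul_same, hSS, hN, re_inner_sum_outer_self,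
      ← Finset.add_sum_erase _ _ (Finset.mem_univ i), norm_inner_self_eq_norm_sq, ← pow_mul]
  rw [hM i, re_inner_conj_outer_self hSpsd.isHermitian.inv]
  exact one_sub_div_pow_four_le_sq_div_sq (norm_pos_iff.2 (hne i))
    (Finset.sum_nonneg fun j _ => by positivity)
    (hS.norm_pow_four_le_re_inner_mul_re_inner hSinv (ξ i))
    (hNx ▸ hS.isSymmetric.re_inner_map_self_sq_le (ξ i))

/-- Success bound for the Pretty Good Measurement on the subnormalized ensemble
`{ξ_i}`: with `N = Σ ξ_i ξ_i†` positive definite and `M_i = N^{-1/2} ξ_i ξ_i† N^{-1/2}`,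
one has `⟨ξ_i, M_i ξ_i⟩/‖ξ_i‖² ≥ 1 - Σ_{j ≠ i} |⟨ξ_i, ξ_j⟩|²/‖ξ_i‖⁴` for every `i`. -/
theorem pgm_success_bound
    (D m : ℕ) (ξ : Fin m → EuclideanSpace ℂ (Fin D))
    (hne : ∀ i, ξ i ≠ 0)
    (hspan : Submodule.span ℂ (Set.range ξ) = ⊤)
    (N : Matrix (Fin D) (Fin D) ℂ) (hN : N = ∑ i, outer (ξ i))
    (hNpd : N.PosDef)
    (M : Fin m → Matrix (Fin D) (Fin D) ℂ)
    (hM : ∀ i, M i = (CFC.sqrt N)⁻¹ * outer (ξ i) * (CFC.sqrt N)⁻¹) :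
    ∀ i, (⟪ξ i, (WithLp.toLp 2 ((M i).mulVec (ξ i)) : EuclideanSpace ℂ (Fin D))⟫_ℂ).re / ‖ξ i‖ ^ 2 ≥
      1 - (∑ j ∈ Finset.univ.erase i, ‖⟪ξ i, ξ j⟫_ℂ‖ ^ 2) / ‖ξ i‖ ^ 4 :=
  pgm_success_bound_general D m ξ hne N hN hNpd M hM
end

section
/- Let ξ_1, ..., ξ_m be vectors in ℂ^D whose span is all of ℂ^D, so that N := Σ_{i=1}^m ξ_i ξ_i† is positive definite. Let T be the m×m Gram matrix with entries T_{ij} = ⟨ξ_i, ξ_j⟩. Then T is positive semidefinite and its positive semidefinite square root satisfies (√T)_{ij} = ⟨ξ_i, N^{-1/2} ξ_j⟩ for all i, j, where N^{-1/2} is the inverse of the positive definite square root of N. -/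
open Matrix
open scoped InnerProductSpace ComplexOrder

/-- The positive semidefinite square root of a positive semidefinite matrix (the definition
removed from Mathlib, restored with its old meaning). -/
noncomputable def Matrix.PosSemidef.sqrt {n 𝕜 : Type*} [Fintype n] [DecidableEq n] [RCLike 𝕜]
    {A : Matrix n n 𝕜} (hA : A.PosSemidef) : Matrix n n 𝕜 :=
  hA.isHermitian.eigenvectorUnitary.1 * diagonal ((↑) ∘ (√·) ∘ hA.isHermitian.eigenvalues) *
  (star hA.isHermitian.eigenvectorUnitary : Matrix n n 𝕜)

/-!
Write `X` for the `D × m` matrix whose columns are the `ξ j`, so that `T = Xᴴ X` and `N = X Xᴴ`.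
The matrix `S = Xᴴ N^{-1/2} X` is positive semidefinite, and
`S² = Xᴴ N^{-1/2} (X Xᴴ) N^{-1/2} X = Xᴴ X = T`, so `S = √T` by uniqueness of positive
semidefinite square roots; its entries are `⟨ξ i, N^{-1/2} ξ j⟩`.
-/

open scoped MatrixOrder

namespace Matrix.PosSemidef

variable {n 𝕜 : Type*} [Fintype n] [DecidableEq n] [RCLike 𝕜] {A : Matrix n n 𝕜}

lemma sqrt_eq_cfcSqrt (hA : A.PosSemidef) : hA.sqrt = CFC.sqrt A := by
  rw [CFC.sqrt_eq_cfc, cfc_nnreal_eq_real _ A hA.nonneg, hA.1.cfc_eq]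
  simp only [IsHermitian.cfc, Matrix.PosSemidef.sqrt]
  congr 3
  funext i
  simp [Real.coe_sqrt, max_eq_left (hA.eigenvalues_nonneg i)]

lemma posSemidef_sqrt (hA : A.PosSemidef) : hA.sqrt.PosSemidef :=
  hA.sqrt_eq_cfcSqrt ▸ (CFC.sqrt_nonneg A).posSemidef

lemma sqrt_mul_self (hA : A.PosSemidef) : hA.sqrt * hA.sqrt = A :=
  hA.sqrt_eq_cfcSqrt ▸ CFC.sqrt_mul_sqrt_self A hA.nonneg

lemma eq_sqrt_of_sq_eq {B : Matrix n n 𝕜} (hB : B.PosSemidef) (hA : A.PosSemidef)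
    (h : B ^ 2 = A) :
    B = hA.sqrt := by
  rw [hA.sqrt_eq_cfcSqrt, eq_comm, CFC.sqrt_eq_iff A B hA.nonneg hB.nonneg, ← h, sq]

end Matrix.PosSemidef

namespace Matrix

variable {n m 𝕜 : Type*} [Fintype n] [DecidableEq n] [Fintype m] [DecidableEq m] [RCLike 𝕜]

lemma PosDef.isUnit_det_sqrt {A : Matrix n n 𝕜} (hA : A.PosDef) :
    IsUnit hA.posSemidef.sqrt.det := by
  have h : IsUnit (hA.posSemidef.sqrt * hA.posSemidef.sqrt) := by
    rw [hA.posSemidef.sqrt_mul_self]; exact hA.isUnit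
  exact (isUnit_iff_isUnit_det _).1 (isUnit_of_mul_isUnit_left h)

theorem sqrt_conjTranspose_mul_self (X : Matrix n m 𝕜) (hX : (X * Xᴴ).PosDef) :
    (posSemidef_conjTranspose_mul_self X).sqrt = Xᴴ * hX.posSemidef.sqrt⁻¹ * X := by
  have hSS := hX.posSemidef.sqrt_mul_self
  have hS := hX.isUnit_det_sqrt
  set S := hX.posSemidef.sqrt
  refine (PosSemidef.eq_sqrt_of_sq_eq
    (hX.posSemidef.posSemidef_sqrt.inv.conjTranspose_mul_mul_same X) _ ?_).symm
  calc (Xᴴ * S⁻¹ * X) ^ 2 = Xᴴ * (S⁻¹ * (X * Xᴴ) * S⁻¹) * X := by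
        simp only [sq, Matrix.mul_assoc]
    _ = Xᴴ * ((S⁻¹ * S) * (S * S⁻¹)) * X := by
        rw [← hSS]; simp only [Matrix.mul_assoc]
    _ = Xᴴ * X := by
        rw [nonsing_inv_mul S hS, mul_nonsing_inv S hS, Matrix.mul_one, Matrix.mul_one]

end Matrix

section ColumnMatrix

variable {ι d 𝕜 : Type*} [Fintype d] [RCLike 𝕜]

def columnMatrix (ξ : ι → EuclideanSpace 𝕜 d) : Matrix d ι 𝕜 := Matrix.of fun a j => ξ j a

lemma conjTranspose_columnMatrix_mul_mul_apply (ξ : ι → EuclideanSpace 𝕜 d) (M : Matrix d d 𝕜)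
    (i j : ι) :
    ((columnMatrix ξ)ᴴ * M * columnMatrix ξ) i j = ⟪ξ i, WithLp.toLp 2 (M *ᵥ ξ j)⟫_𝕜 := by
  simp only [EuclideanSpace.inner_eq_star_dotProduct, mul_apply, conjTranspose_apply, columnMatrix,
    of_apply, dotProduct, mulVec, Finset.sum_mul]
  rw [Finset.sum_comm]
  exact Finset.sum_congr rfl fun a _ => Finset.sum_congr rfl fun b _ => by simp; ring

lemma gram_eq_conjTranspose_columnMatrix_mul_self [DecidableEq d] (ξ : ι → EuclideanSpace 𝕜 d) :
    (Matrix.of fun i j => ⟪ξ i, ξ j⟫_𝕜) = (columnMatrix ξ)ᴴ * columnMatrix ξ := by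
  ext i j
  simpa using (conjTranspose_columnMatrix_mul_mul_apply ξ 1 i j).symm

end ColumnMatrix

lemma sum_outer_eq_columnMatrix_mul_conjTranspose {D : ℕ} {ι : Type*} [Fintype ι]
    (ξ : ι → EuclideanSpace ℂ (Fin D)) :
    ∑ i, outer (ξ i) = columnMatrix ξ * (columnMatrix ξ)ᴴ := by
  ext a b
  simp [mul_apply, Matrix.sum_apply, outer, columnMatrix]

theorem gram_sqrt_entries_general
    (D m : ℕ) (ξ : Fin m → EuclideanSpace ℂ (Fin D))
    (N : Matrix (Fin D) (Fin D) ℂ) (hN : N = ∑ i, outer (ξ i))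
    (hNpd : N.PosDef)
    (T : Matrix (Fin m) (Fin m) ℂ) (hT : T = Matrix.of fun i j => ⟪ξ i, ξ j⟫_ℂ) :
    ∃ hTpsd : T.PosSemidef, ∀ i j,
      hTpsd.sqrt i j =
        ⟪ξ i, (WithLp.toLp 2 (((hNpd.posSemidef.sqrt)⁻¹).mulVec (ξ j)) : EuclideanSpace ℂ (Fin D))⟫_ℂ := by
  rw [gram_eq_conjTranspose_columnMatrix_mul_self] at hT
  rw [sum_outer_eq_columnMatrix_mul_conjTranspose] at hN
  subst hT hN
  refine ⟨posSemidef_conjTranspose_mul_self _, fun i j => ?_⟩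
  rw [sqrt_conjTranspose_mul_self _ hNpd, conjTranspose_columnMatrix_mul_mul_apply]

/-- For vectors `ξ_1, …, ξ_m` spanning `ℂ^D` with `N = Σ ξ_i ξ_i†` positive definite, the Gram
matrix `T` with `T_{ij} = ⟨ξ_i, ξ_j⟩` is positive semidefinite, and its positive semidefinite
square root satisfies `(√T)_{ij} = ⟨ξ_i, N^{-1/2} ξ_j⟩`. -/
theorem gram_sqrt_entries
    (D m : ℕ) (ξ : Fin m → EuclideanSpace ℂ (Fin D))
    (hspan : Submodule.span ℂ (Set.range ξ) = ⊤)
    (N : Matrix (Fin D) (Fin D) ℂ) (hN : N = ∑ i, outer (ξ i))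
    (hNpd : N.PosDef)
    (T : Matrix (Fin m) (Fin m) ℂ) (hT : T = Matrix.of fun i j => ⟪ξ i, ξ j⟫_ℂ) :
    ∃ hTpsd : T.PosSemidef, ∀ i j,
      hTpsd.sqrt i j =
        ⟪ξ i, (WithLp.toLp 2 (((hNpd.posSemidef.sqrt)⁻¹).mulVec (ξ j)) : EuclideanSpace ℂ (Fin D))⟫_ℂ :=
  gram_sqrt_entries_general D m ξ N hN hNpd T hT
end

section
/- Let d ≥ 2, n ≥ 2, and let X_1, ..., X_{d^n} be independent real random variables, each exponentially distributed with rate 1. Let s be a positive integer with 128 s ≤ d^{n-1}. Then for every j' with 1 ≤ j' ≤ s, Pr( (Σ_{t=1}^{j'-1} X_t) / (Σ_{t=j'}^{d^n} X_t) > 1/(4d) ) ≤ 2 e^{-d^{n-1}/32}. -/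
/-!
Chernoff bounds on both sums. Let `K ≤ s` and `M` be the numbers of summands of the numerator
and denominator and `D = d^(n-1)`, so `K + M = d D`, `128 K ≤ D` and `M ≥ D`. With parameter
`1/2` (moment generating function `2^K`) the numerator exceeds `M / (8 d)` with probability at
most `e^{-M/(16 d)} 2^K ≤ e^{-D/32}`; with parameter `-1` (moment generating function `2^{-M}`)
the denominator falls below `M / 2` with probability at most `e^{M/2} 2^{-M} ≤ e^{-D/32}`.
Outside both events the ratio is at most `1 / (4 d)`.
-/

open MeasureTheory ProbabilityTheory

namespace ProbabilityTheory

variable {r c : ℝ}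

lemma exponentialPDF_mul_exp_mul (hr : 0 < r) (hc : c < r) (x : ℝ) :
    exponentialPDF r x * ENNReal.ofReal (Real.exp (c * x))
      = ENNReal.ofReal (r / (r - c)) * exponentialPDF (r - c) x := by
  have hrc : 0 < r - c := sub_pos.mpr hc
  rcases le_or_gt 0 x with hx | hx
  · rw [exponentialPDF_of_nonneg hx, exponentialPDF_of_nonneg hx,
      ← ENNReal.ofReal_mul (by positivity), ← ENNReal.ofReal_mul (by positivity),
      mul_assoc, ← Real.exp_add, ← mul_assoc, div_mul_cancel₀ _ hrc.ne']
    ring_nf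
  · rw [exponentialPDF_of_neg hx, exponentialPDF_of_neg hx, zero_mul, mul_zero]

lemma lintegral_exp_mul_expMeasure (hr : 0 < r) (hc : c < r) :
    ∫⁻ x, ENNReal.ofReal (Real.exp (c * x)) ∂expMeasure r = ENNReal.ofReal (r / (r - c)) := by
  have hpdf : Measurable (exponentialPDF r) := (measurable_exponentialPDFReal r).ennreal_ofReal
  rw [show expMeasure r = volume.withDensity (exponentialPDF r) from rfl,
    lintegral_withDensity_eq_lintegral_mul _ hpdf (by fun_prop)]
  simp_rw [Pi.mul_apply, exponentialPDF_mul_exp_mul hr hc]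
  rw [lintegral_const_mul' _ _ ENNReal.ofReal_ne_top,
    lintegral_exponentialPDF_eq_one (sub_pos.mpr hc), mul_one]

lemma integrable_exp_mul_expMeasure (hr : 0 < r) (hc : c < r) :
    Integrable (fun x ↦ Real.exp (c * x)) (expMeasure r) := by
  refine ⟨by fun_prop, ?_⟩
  simp_rw [HasFiniteIntegral, Real.enorm_eq_ofReal (Real.exp_pos _).le,
    lintegral_exp_mul_expMeasure hr hc]
  exact ENNReal.ofReal_lt_top

lemma mgf_id_expMeasure (hr : 0 < r) (hc : c < r) : mgf id (expMeasure r) c = r / (r - c) := by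
  rw [mgf, integral_eq_lintegral_of_nonneg_ae (ae_of_all _ fun _ ↦ (Real.exp_pos _).le)
    (by fun_prop)]
  simp only [id]
  rw [lintegral_exp_mul_expMeasure hr hc,
    ENNReal.toReal_ofReal (div_nonneg hr.le (sub_pos.mpr hc).le)]

section IndepExponential

variable {Ω ι : Type*} [MeasurableSpace Ω] {μ : Measure Ω} {X : ι → Ω → ℝ}

lemma mgf_sum_of_map_eq_expMeasure (hmeas : ∀ i, Measurable (X i)) (hindep : iIndepFun X μ)
    (hlaw : ∀ i, μ.map (X i) = expMeasure r) (hr : 0 < r) (hc : c < r) (s : Finset ι) :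
    mgf (∑ i ∈ s, X i) μ c = (r / (r - c)) ^ s.card := by
  rw [hindep.mgf_sum hmeas, Finset.prod_eq_pow_card fun i _ ↦ ?_]
  rw [← mgf_id_map (hmeas i).aemeasurable, hlaw i, mgf_id_expMeasure hr hc]

lemma integrable_exp_mul_of_map_eq_expMeasure {Y : Ω → ℝ} (hY : Measurable Y)
    (hlaw : μ.map Y = expMeasure r) (hr : 0 < r) (hc : c < r) :
    Integrable (fun ω ↦ Real.exp (c * Y ω)) μ := by
  have := integrable_exp_mul_expMeasure hr hc
  rw [← hlaw, integrable_map_measure (by fun_prop) hY.aemeasurable] at this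
  exact this

variable [IsFiniteMeasure μ]

lemma measureReal_le_sum_le_of_map_eq_expMeasure (hmeas : ∀ i, Measurable (X i))
    (hindep : iIndepFun X μ) (hlaw : ∀ i, μ.map (X i) = expMeasure r) (hr : 0 < r)
    (hc₀ : 0 ≤ c) (hc : c < r) (s : Finset ι) (a : ℝ) :
    μ.real {ω | a ≤ ∑ i ∈ s, X i ω} ≤ Real.exp (-c * a) * (r / (r - c)) ^ s.card := by
  have := measure_ge_le_exp_mul_mgf a hc₀ (hindep.integrable_exp_mul_sum hmeas (s := s)
    fun i _ ↦ integrable_exp_mul_of_map_eq_expMeasure (hmeas i) (hlaw i) hr hc)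
  simpa only [Finset.sum_apply, mgf_sum_of_map_eq_expMeasure hmeas hindep hlaw hr hc] using this

lemma measureReal_sum_le_le_of_map_eq_expMeasure (hmeas : ∀ i, Measurable (X i))
    (hindep : iIndepFun X μ) (hlaw : ∀ i, μ.map (X i) = expMeasure r) (hr : 0 < r)
    (hc₀ : c ≤ 0) (s : Finset ι) (b : ℝ) :
    μ.real {ω | ∑ i ∈ s, X i ω ≤ b} ≤ Real.exp (-c * b) * (r / (r - c)) ^ s.card := by
  have hc : c < r := hc₀.trans_lt hr
  have := measure_le_le_exp_mul_mgf b hc₀ (hindep.integrable_exp_mul_sum hmeas (s := s)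
    fun i _ ↦ integrable_exp_mul_of_map_eq_expMeasure (hmeas i) (hlaw i) hr hc)
  simpa only [Finset.sum_apply, mgf_sum_of_map_eq_expMeasure hmeas hindep hlaw hr hc] using this

end IndepExponential

end ProbabilityTheory

lemma setOf_lt_div_subset_union {α : Type*} {f g : α → ℝ} {c T : ℝ} (hc : 0 ≤ c)
    (hT : 0 < T) :
    {x | c < f x / g x} ⊆ {x | c * T ≤ f x} ∪ {x | g x ≤ T} := by
  intro x hx
  rcases le_or_gt (g x) T with hg | hg
  · exact Or.inr hg
  · have hfg : c * g x < f x := (lt_div_iff₀ (hT.trans hg)).mp hx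
    exact Or.inl ((mul_le_mul_of_nonneg_left hg.le hc).trans hfg.le)

lemma exp_neg_div_mul_two_pow_le {d D M : ℝ} {K : ℕ} (hd : 2 ≤ d) (hK : 128 * K ≤ D)
    (hMK : M + K = d * D) : Real.exp (-(M / (16 * d))) * 2 ^ K ≤ Real.exp (-D / 32) := by
  have h2K : (2 : ℝ) ^ K ≤ Real.exp K := by
    rw [← Real.exp_one_pow]
    gcongr
    linarith [Real.add_one_le_exp 1]
  have hM : M / (16 * d) = D / 16 - K / (16 * d) := by
    field_simp
    linarith
  have hKd : (K : ℝ) / (16 * d) ≤ K / 32 := by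
    gcongr
    linarith
  calc Real.exp (-(M / (16 * d))) * 2 ^ K
      ≤ Real.exp (-(M / (16 * d))) * Real.exp K := by gcongr
    _ = Real.exp (-(M / (16 * d)) + K) := (Real.exp_add _ _).symm
    _ ≤ Real.exp (-D / 32) := by
        rw [Real.exp_le_exp, hM]
        linarith

lemma exp_half_mul_inv_two_pow_le {D : ℝ} {M : ℕ} (hDM : D ≤ M) :
    Real.exp (M / 2) * 2⁻¹ ^ M ≤ Real.exp (-D / 32) := by
  have hlog := Real.log_two_gt_d9
  rw [← Real.exp_log (by norm_num : (0 : ℝ) < 2⁻¹), ← Real.exp_nat_mul, ← Real.exp_add,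
    Real.exp_le_exp, Real.log_inv]
  nlinarith [(Nat.cast_nonneg M : (0 : ℝ) ≤ M)]

lemma Fin.card_filter_val_add_one_lt (N j : ℕ) :
    (Finset.univ.filter (fun t : Fin N => (t : ℕ) + 1 < j)).card = min N (j - 1) := by
  rw [← Fin.card_filter_val_lt]
  congr 1 with t
  simp only [Finset.mem_filter, Finset.mem_univ, true_and]
  omega

theorem exponential_ratio_bound_general
    (d n s : ℕ) (hd : 2 ≤ d) (hn : 2 ≤ n) (h128 : 128 * s ≤ d ^ (n - 1))
    {Ω : Type*} [MeasurableSpace Ω] (Pr : Measure Ω) [IsProbabilityMeasure Pr]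
    (X : Fin (d ^ n) → Ω → ℝ)
    (hmeas : ∀ t, Measurable (X t))
    (hindep : iIndepFun X Pr)
    (hlaw : ∀ t, Pr.map (X t) = expMeasure 1)
    (j' : ℕ) (hjs : j' ≤ s) :
    Pr {ω | (1 : ℝ) / (4 * d) <
        (∑ t ∈ Finset.univ.filter (fun t : Fin (d ^ n) => (t : ℕ) + 1 < j'), X t ω) /
        (∑ t ∈ Finset.univ.filter (fun t : Fin (d ^ n) => j' ≤ (t : ℕ) + 1), X t ω)}
      ≤ ENNReal.ofReal (2 * Real.exp (-(d : ℝ) ^ (n - 1) / 32)) := by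
  set A := Finset.univ.filter (fun t : Fin (d ^ n) => (t : ℕ) + 1 < j')
  set B := Finset.univ.filter (fun t : Fin (d ^ n) => j' ≤ (t : ℕ) + 1)
  set D : ℝ := (d : ℝ) ^ (n - 1) with hD
  have hd' : (2 : ℝ) ≤ d := by exact_mod_cast hd
  have hAB : (B.card : ℝ) + A.card = d * D := by
    have : A.card + B.card = d ^ n := by
      simpa only [A, B, not_lt, Finset.card_univ, Fintype.card_fin] using
        Finset.card_filter_add_card_filter_not (s := .univ)
          (fun t : Fin (d ^ n) => (t : ℕ) + 1 < j')
    rw [hD, ← pow_succ', Nat.sub_add_cancel (by omega : 1 ≤ n)]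
    exact_mod_cast (add_comm _ _).trans this
  have hA : 128 * (A.card : ℝ) ≤ D := by
    have : A.card ≤ s := by rw [Fin.card_filter_val_add_one_lt]; omega
    rw [hD]
    exact_mod_cast (Nat.mul_le_mul_left 128 this).trans h128
  have hDB : D ≤ B.card := by nlinarith [(Nat.cast_nonneg A.card : (0 : ℝ) ≤ A.card)]
  have hT : 0 < (B.card : ℝ) / 2 := by linarith [show 0 < D by positivity]
  have hnum : Pr {ω | 1 / (4 * d) * (B.card / 2) ≤ ∑ t ∈ A, X t ω}
      ≤ ENNReal.ofReal (Real.exp (-D / 32)) := by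
    rw [← ofReal_measureReal]
    refine ENNReal.ofReal_le_ofReal ((measureReal_le_sum_le_of_map_eq_expMeasure hmeas hindep hlaw
      one_pos (by norm_num : (0 : ℝ) ≤ 1 / 2) (by norm_num) A _).trans
      (le_of_eq_of_le ?_ (exp_neg_div_mul_two_pow_le hd' hA hAB)))
    norm_num
    ring
  have hden : Pr {ω | ∑ t ∈ B, X t ω ≤ B.card / 2}
      ≤ ENNReal.ofReal (Real.exp (-D / 32)) := by
    rw [← ofReal_measureReal]
    refine ENNReal.ofReal_le_ofReal ((measureReal_sum_le_le_of_map_eq_expMeasure hmeas hindep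
      hlaw one_pos (by norm_num : (-1 : ℝ) ≤ 0) B _).trans
      (le_of_eq_of_le ?_ (exp_half_mul_inv_two_pow_le hDB)))
    norm_num
  calc _ ≤ Pr ({ω | 1 / (4 * d) * (B.card / 2) ≤ ∑ t ∈ A, X t ω} ∪
          {ω | ∑ t ∈ B, X t ω ≤ B.card / 2}) :=
        measure_mono (setOf_lt_div_subset_union (by positivity) hT)
    _ ≤ ENNReal.ofReal (Real.exp (-D / 32)) + ENNReal.ofReal (Real.exp (-D / 32)) :=
        (measure_union_le _ _).trans (add_le_add hnum hden)
    _ = _ := by rw [← ENNReal.ofReal_add (by positivity) (by positivity), two_mul]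

/-- For independent rate-1 exponential random variables `X_1, …, X_{d^n}` (with `d, n ≥ 2` and
`128 s ≤ d^{n-1}`), and any `1 ≤ j' ≤ s`:
`Pr((Σ_{t=1}^{j'-1} X_t)/(Σ_{t=j'}^{d^n} X_t) > 1/(4d)) ≤ 2 exp(-d^{n-1}/32)`.
Here `X_t` is indexed by `t : Fin (d^n)` representing `X_{t+1}`. -/
theorem exponential_ratio_bound
    (d n s : ℕ) (hd : 2 ≤ d) (hn : 2 ≤ n) (hs : 0 < s) (h128 : 128 * s ≤ d ^ (n - 1))
    {Ω : Type*} [MeasurableSpace Ω] (Pr : Measure Ω) [IsProbabilityMeasure Pr]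
    (X : Fin (d ^ n) → Ω → ℝ)
    (hmeas : ∀ t, Measurable (X t))
    (hindep : iIndepFun X Pr)
    (hlaw : ∀ t, Pr.map (X t) = expMeasure 1)
    (j' : ℕ) (hj1 : 1 ≤ j') (hjs : j' ≤ s) :
    Pr {ω | (1 : ℝ) / (4 * d) <
        (∑ t ∈ Finset.univ.filter (fun t : Fin (d ^ n) => (t : ℕ) + 1 < j'), X t ω) /
        (∑ t ∈ Finset.univ.filter (fun t : Fin (d ^ n) => j' ≤ (t : ℕ) + 1), X t ω)}
      ≤ ENNReal.ofReal (2 * Real.exp (-(d : ℝ) ^ (n - 1) / 32)) :=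
  exponential_ratio_bound_general d n s hd hn h128 Pr X hmeas hindep hlaw j' hjs
end
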